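/- arXiv:2006.09720 — 7 statements merged into one kernel-verified Lean document; each statement's English description precedes it below -/
import Mathlib

section
/- Let z = (ρ, v, m) ∈ ℝ × ℝ² × ℝ² satisfy |v|² + ρ v₂ = 0, m · v⊥ = 0, and m · (v + (0,ρ)) = 0. Then there exists ξ ∈ ℝ² \ {0} such that m · ξ = 0, v · ξ = 0, and (v + (0,ρ)) · ξ⊥ = 0. -/
open MeasureTheory

noncomputable section

/-- Euclidean dot product on ℝ². -/
def dot (a b : ℝ × ℝ) : ℝ := a.1 * b.1 + a.2 * b.2

/-- Rotation by 90°: (a,b)⊥ = (−b, a). -/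
def perp (a : ℝ × ℝ) : ℝ × ℝ := (-a.2, a.1)

/-- Euclidean norm on ℝ². -/
def nrm (a : ℝ × ℝ) : ℝ := Real.sqrt (a.1 ^ 2 + a.2 ^ 2)

/-- State space ℝ × ℝ² × ℝ² of (ρ, v, m). -/
abbrev Pt := ℝ × (ℝ × ℝ) × (ℝ × ℝ)

/-- The wave cone Λ of stationary IPM. -/
def Lam : Set Pt :=
  {z | dot z.2.1 z.2.1 + z.1 * z.2.1.2 = 0 ∧ dot z.2.2 (perp z.2.1) = 0 ∧
       dot z.2.2 (z.2.1 + (0, z.1)) = 0}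

/-- The constitutive set K. -/
def Kset : Set Pt := {z | |z.1| = 1 ∧ z.2.2 = z.1 • z.2.1}

def G2 (z : Pt) : ℝ := dot z.2.2 (perp z.2.1)

def G3 (z : Pt) : ℝ :=
  -dot (z.2.1 - z.2.2) (z.2.1 + (0, 1 + z.1)) + dot (z.2.1 - z.2.2) (z.2.1 - z.2.2) / 2

def G4 (z : Pt) : ℝ :=
  -dot (z.2.1 + z.2.2) (z.2.1 - (0, 1 - z.1)) + dot (z.2.1 + z.2.2) (z.2.1 + z.2.2) / 2

/-! With `w = v + (0, ρ)`, the first condition reads `v · w = 0`, so `ξ = w` works whenever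
`w ≠ 0`. If `w = 0` the last condition is void, and `m · v⊥ = 0` says that `m` and `v` are
parallel, so they have a common nonzero orthogonal vector. -/

lemma dot_perp_self (a : ℝ × ℝ) : dot a (perp a) = 0 := by
  simp only [dot, perp]
  ring

lemma dot_perp_anticomm (a b : ℝ × ℝ) : dot a (perp b) = -dot b (perp a) := by
  simp only [dot, perp]
  ring

@[simp]
lemma dot_zero_left (a : ℝ × ℝ) : dot 0 a = 0 := by
  simp [dot]

@[simp]
lemma perp_eq_zero_iff {a : ℝ × ℝ} : perp a = 0 ↔ a = 0 := by
  simp only [perp, Prod.ext_iff, Prod.fst_zero, Prod.snd_zero, neg_eq_zero]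
  exact and_comm

lemma exists_ne_zero_dot_eq_zero (a : ℝ × ℝ) : ∃ ξ : ℝ × ℝ, ξ ≠ 0 ∧ dot a ξ = 0 := by
  by_cases ha : a = 0
  · exact ⟨(1, 0), by simp [Prod.ext_iff], by simp [ha]⟩
  · exact ⟨perp a, perp_eq_zero_iff.not.mpr ha, dot_perp_self a⟩

/-- `dot a (perp b)` is the determinant of `(a, b)`. -/
lemma exists_ne_zero_dot_eq_zero_of_dot_perp_eq_zero {a b : ℝ × ℝ} (hab : dot a (perp b) = 0) :
    ∃ ξ : ℝ × ℝ, ξ ≠ 0 ∧ dot a ξ = 0 ∧ dot b ξ = 0 := by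
  by_cases ha : a = 0
  · obtain ⟨ξ, hξ, hbξ⟩ := exists_ne_zero_dot_eq_zero b
    exact ⟨ξ, hξ, by simp [ha], hbξ⟩
  · refine ⟨perp a, perp_eq_zero_iff.not.mpr ha, dot_perp_self a, ?_⟩
    rw [dot_perp_anticomm, hab, neg_zero]

theorem stmt1 (ρ : ℝ) (v m : ℝ × ℝ)
    (h1 : dot v v + ρ * v.2 = 0) (h2 : dot m (perp v) = 0) (h3 : dot m (v + (0, ρ)) = 0) :
    ∃ ξ : ℝ × ℝ, ξ ≠ 0 ∧ dot m ξ = 0 ∧ dot v ξ = 0 ∧ dot (v + (0, ρ)) (perp ξ) = 0 := by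
  set w := v + (0, ρ) with hw_def
  have hvw : dot v w = 0 := by
    simp only [dot, hw_def, Prod.fst_add, Prod.snd_add, add_zero] at h1 ⊢
    linarith
  by_cases hw : w = 0
  · obtain ⟨ξ, hξ, hmξ, hvξ⟩ := exists_ne_zero_dot_eq_zero_of_dot_perp_eq_zero h2
    exact ⟨ξ, hξ, hmξ, hvξ, by rw [hw, dot_zero_left]⟩
  · exact ⟨w, hw, h3, hvw, dot_perp_self w⟩
end
end

section
/- The function G₃(ρ, v, m) := −(v − m) · (v + (0, 1+ρ)) + |v − m|²/2 is Λ-convex (for every z₀ ∈ ℝ × ℝ² × ℝ² and z ∈ Λ, the map t ↦ G₃(z₀ + tz) is convex) and G₃ vanishes on K. -/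
open MeasureTheory

noncomputable section

/-- The homogeneous quadratic part of `G3`: the constant `1` in `v + (0, 1 + ρ)` dropped. -/
def G3quad (z : Pt) : ℝ :=
  -dot (z.2.1 - z.2.2) (z.2.1 + (0, z.1)) + dot (z.2.1 - z.2.2) (z.2.1 - z.2.2) / 2

def G3lin (z₀ z : Pt) : ℝ :=
  -dot (z.2.1 - z.2.2) (z₀.2.1 + (0, 1 + z₀.1)) - dot (z₀.2.1 - z₀.2.2) (z.2.1 + (0, z.1)) +
    dot (z₀.2.1 - z₀.2.2) (z.2.1 - z.2.2)

lemma dot_self_nonneg (a : ℝ × ℝ) : 0 ≤ dot a a :=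
  add_nonneg (mul_self_nonneg _) (mul_self_nonneg _)

lemma convexOn_univ_quadratic {a b c : ℝ} (hc : 0 ≤ c) :
    ConvexOn ℝ Set.univ (fun t : ℝ => a + b * t + c * t ^ 2) := by
  refine ⟨convex_univ, fun x _ y _ μ ν hμ hν hμν => ?_⟩
  obtain rfl : ν = 1 - μ := by linarith
  simp only [smul_eq_mul]
  nlinarith [mul_nonneg (mul_nonneg (mul_nonneg hc hμ) hν) (sq_nonneg (x - y))]

lemma G3_add_smul (z₀ z : Pt) (t : ℝ) :
    G3 (z₀ + t • z) = G3 z₀ + G3lin z₀ z * t + G3quad z * t ^ 2 := by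
  simp only [G3, G3lin, G3quad, dot, Prod.fst_add, Prod.snd_add, Prod.smul_fst, Prod.smul_snd,
    Prod.fst_sub, Prod.snd_sub, smul_eq_mul]
  ring

/-- On `Λ` the first and third defining relations cancel the indefinite part of `G3quad`. -/
lemma G3quad_eq_of_mem_Lam {z : Pt} (hz : z ∈ Lam) :
    G3quad z = dot (z.2.1 - z.2.2) (z.2.1 - z.2.2) / 2 := by
  obtain ⟨hv, -, hm⟩ := hz
  simp only [G3quad, dot, Prod.fst_add, Prod.snd_add, Prod.fst_sub, Prod.snd_sub] at hv hm ⊢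
  linear_combination -hv + hm

lemma G3quad_nonneg_of_mem_Lam {z : Pt} (hz : z ∈ Lam) : 0 ≤ G3quad z := by
  rw [G3quad_eq_of_mem_Lam hz]
  exact div_nonneg (dot_self_nonneg _) zero_le_two

lemma G3_eq_zero_of_mem_Kset {z : Pt} (hz : z ∈ Kset) : G3 z = 0 := by
  obtain ⟨ρ, v, m⟩ := z
  obtain ⟨hρ, hm : m = ρ • v⟩ := hz
  subst hm
  rcases (abs_eq zero_le_one).mp hρ with rfl | rfl <;>
    · simp only [G3, dot, Prod.fst_add, Prod.snd_add, Prod.fst_sub, Prod.snd_sub, Prod.smul_fst,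
        Prod.smul_snd, smul_eq_mul]
      ring

theorem stmt4 :
    (∀ z₀ : Pt, ∀ z ∈ Lam, ConvexOn ℝ Set.univ (fun t : ℝ => G3 (z₀ + t • z))) ∧
    (∀ z ∈ Kset, G3 z = 0) := by
  refine ⟨fun z₀ z hz => ?_, fun z hz => G3_eq_zero_of_mem_Kset hz⟩
  simp only [G3_add_smul]
  exact convexOn_univ_quadratic (G3quad_nonneg_of_mem_Lam hz)
end
end

section
/- Every element of the wave cone Λ of stationary IPM has one of the following three forms: (i) (ρ, (ρ/2)(e − (0,1)), ℓ(e − (0,1))) with ρ ≠ 0, e ∈ S¹ \ {(0,1)}, ℓ ∈ ℝ; (ii) (ρ, 0, (m₁, 0)) with ρ ≠ 0, m₁ ∈ ℝ; (iii) (0, 0, m) with m ∈ ℝ²; and conversely every such element lies in Λ. -/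
open MeasureTheory

noncomputable section

/-! For `ρ ≠ 0` the first equation of `Λ` says exactly that `e := (2 / ρ) v + (0, 1)` lies on
the unit circle, and for `v ≠ 0` the second says that `m` is parallel to `v`, hence to
`e - (0, 1)`. The third equation is then automatic, since
`(e - (0, 1)) · (e + (0, 1)) = |e|² - 1` and `v + (0, ρ) = (ρ / 2) (e + (0, 1))`.
In the degenerate cases, `ρ = 0` forces `v = 0`, and `v = 0` reduces `Λ` to `ρ m₂ = 0`. -/

lemma dot_self_eq_zero_iff {v : ℝ × ℝ} : dot v v = 0 ↔ v = 0 := by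
  obtain ⟨a, b⟩ := v
  simp only [dot, Prod.mk_eq_zero]
  constructor
  · intro h
    exact ⟨by nlinarith [sq_nonneg a, sq_nonneg b], by nlinarith [sq_nonneg a, sq_nonneg b]⟩
  · rintro ⟨rfl, rfl⟩
    ring

lemma nrm_eq_one_iff {e : ℝ × ℝ} : nrm e = 1 ↔ dot e e = 1 := by
  rw [nrm, Real.sqrt_eq_one, dot, sq, sq]

lemma exists_eq_smul_of_dot_perp_eq_zero {m v : ℝ × ℝ} (hv : v ≠ 0)
    (h : dot m (perp v) = 0) : ∃ l : ℝ, m = l • v := by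
  have hvv : dot v v ≠ 0 := dot_self_eq_zero_iff.not.mpr hv
  have hproj : dot v v • m = dot m v • v := by
    obtain ⟨m₁, m₂⟩ := m
    obtain ⟨v₁, v₂⟩ := v
    simp only [dot, perp, Prod.smul_mk, smul_eq_mul, Prod.mk.injEq] at h ⊢
    constructor
    · linear_combination (-v₂) * h
    · linear_combination v₁ * h
  refine ⟨dot m v / dot v v, ?_⟩
  rw [div_eq_inv_mul, mul_smul, ← hproj, inv_smul_smul₀ hvv]

lemma dot_smul_sub_add_eq (c l : ℝ) (e : ℝ × ℝ) :
    dot (l • (e - (0, 1))) (c • (e - (0, 1)) + (0, 2 * c)) = l * c * (dot e e - 1) := by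
  obtain ⟨e₁, e₂⟩ := e
  simp only [dot, Prod.smul_mk, smul_eq_mul, Prod.mk_sub_mk, Prod.mk_add_mk]
  ring

namespace Lam

lemma mem_iff {ρ : ℝ} {v m : ℝ × ℝ} :
    (ρ, v, m) ∈ Lam ↔
      dot v (v + (0, ρ)) = 0 ∧ dot m (perp v) = 0 ∧ dot m (v + (0, ρ)) = 0 := by
  simp only [Lam, Set.mem_ofPred_eq, dot, Prod.fst_add, Prod.snd_add]
  ring_nf

lemma mem_of_eq_smul_sub {ρ l : ℝ} {e : ℝ × ℝ} (he : dot e e = 1) :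
    (ρ, (ρ / 2) • (e - (0, 1)), l • (e - (0, 1))) ∈ Lam := by
  have key := fun k => dot_smul_sub_add_eq (ρ / 2) k e
  simp only [he, sub_self, mul_zero, mul_div_cancel₀ ρ two_ne_zero] at key
  refine mem_iff.mpr ⟨key _, ?_, key l⟩
  obtain ⟨e₁, e₂⟩ := e
  simp only [dot, perp, Prod.smul_mk, smul_eq_mul, Prod.mk_sub_mk]
  ring

lemma mem_zero_density_iff {v m : ℝ × ℝ} : ((0 : ℝ), v, m) ∈ Lam ↔ v = 0 := by
  constructor
  · intro h
    simpa only [Prod.mk_zero_zero, add_zero, dot_self_eq_zero_iff] using (mem_iff.mp h).1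
  · rintro rfl
    simp [mem_iff, dot, perp]

lemma mem_zero_velocity_iff {ρ : ℝ} {m : ℝ × ℝ} : (ρ, (0 : ℝ × ℝ), m) ∈ Lam ↔ ρ * m.2 = 0 := by
  simp [mem_iff, dot, perp, mul_comm]

lemma exists_eq_smul_sub_of_mem {ρ : ℝ} {v m : ℝ × ℝ} (hρ : ρ ≠ 0) (hv : v ≠ 0)
    (h : (ρ, v, m) ∈ Lam) :
    ∃ e : ℝ × ℝ, ∃ l : ℝ, dot e e = 1 ∧ e ≠ (0, 1) ∧
      v = (ρ / 2) • (e - (0, 1)) ∧ m = l • (e - (0, 1)) := by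
  obtain ⟨hcircle, hperp, -⟩ := mem_iff.mp h
  set e : ℝ × ℝ := (2 / ρ) • v + (0, 1)
  have hve : v = (ρ / 2) • (e - (0, 1)) := by
    rw [add_sub_cancel_right, smul_smul, div_mul_div_cancel₀ two_ne_zero, div_self hρ, one_smul]
  have he : dot e e = 1 := by
    have key := dot_smul_sub_add_eq (ρ / 2) (ρ / 2) e
    rw [mul_div_cancel₀ ρ two_ne_zero, ← hve, hcircle] at key
    have hρ2 : ρ / 2 * (ρ / 2) ≠ 0 := by positivity
    linarith [(mul_eq_zero.mp key.symm).resolve_left hρ2]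
  have hne : e ≠ (0, 1) := fun h0 => hv (by rw [hve, h0, sub_self, smul_zero])
  obtain ⟨l, rfl⟩ := exists_eq_smul_of_dot_perp_eq_zero hv hperp
  exact ⟨e, l * (ρ / 2), he, hne, hve, by rw [mul_smul, ← hve]⟩

end Lam

theorem stmt7 (z : Pt) :
    z ∈ Lam ↔
      ((∃ ρ : ℝ, ∃ e : ℝ × ℝ, ∃ l : ℝ, ρ ≠ 0 ∧ nrm e = 1 ∧ e ≠ (0, 1) ∧
          z = (ρ, (ρ / 2) • (e - (0, 1)), l • (e - (0, 1)))) ∨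
        (∃ ρ m₁ : ℝ, ρ ≠ 0 ∧ z = (ρ, 0, (m₁, 0))) ∨
        (∃ m : ℝ × ℝ, z = (0, 0, m))) := by
  obtain ⟨ρ, v, m⟩ := z
  constructor
  · intro h
    by_cases hρ : ρ = 0
    · subst hρ
      rw [Lam.mem_zero_density_iff.mp h]
      exact Or.inr (Or.inr ⟨m, rfl⟩)
    by_cases hv : v = 0
    · subst hv
      have hm : m.2 = 0 := (mul_eq_zero.mp (Lam.mem_zero_velocity_iff.mp h)).resolve_left hρ
      exact Or.inr (Or.inl ⟨ρ, m.1, hρ, by rw [← hm]⟩)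
    obtain ⟨e, l, he, hne, rfl, rfl⟩ := Lam.exists_eq_smul_sub_of_mem hρ hv h
    exact Or.inl ⟨ρ, e, l, hρ, nrm_eq_one_iff.mpr he, hne, rfl⟩
  · rintro (⟨ρ, e, l, -, he, -, h⟩ | ⟨ρ, m₁, -, h⟩ | ⟨m, h⟩) <;> rw [h]
    · exact Lam.mem_of_eq_smul_sub (nrm_eq_one_iff.mp he)
    · exact Lam.mem_zero_velocity_iff.mpr (mul_zero ρ)
    · exact Lam.mem_zero_density_iff.mpr rfl
end
end

section
/- Suppose |ρ| < 1, v ∈ ℝ² \ {0}, and ρ − (1−ρ²)v₂/|v|² ≥ 1. Set λ = |v|²/(|v|² − (1−ρ)v₂) and ψ = (|v|² + ρv₂)/v₂. Then v₂ < 0, 0 < λ < 1, −1 ≤ ψ < ρ, the identity (ρ, v, v) = λ(1, v/λ, v/λ) + (1−λ)(ψ, 0, 0) holds, and (1, v/λ, v/λ) − (ψ, 0, 0) = (1−ψ, v/λ, v/λ) lies in Λ, i.e. |v/λ|² + (1−ψ)(v₂/λ) = 0. -/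
open MeasureTheory

noncomputable section

/-! Since `|ρ| < 1`, the hypothesis on `v` says `|v|² + (1 + ρ) v₂ ≤ 0`, which forces `v₂ < 0` and
is exactly the inequality `ψ ≥ -1`. The weights are chosen so that the `K`-point `(1, v/λ, v/λ)`
and `(ψ, 0, 0)` average to `(ρ, v, v)`; their difference lies in `Λ` because
`|v|²/λ = |v|² - (1 - ρ) v₂`. -/

/-- The weight `λ` of the point of `K` in the laminate. -/
def laminateWeight (ρ : ℝ) (v : ℝ × ℝ) : ℝ := dot v v / (dot v v - (1 - ρ) * v.2)

/-- The density `ψ` of the other endpoint `(ψ, 0, 0)` of the laminate. -/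
def laminateDensity (ρ : ℝ) (v : ℝ × ℝ) : ℝ := (dot v v + ρ * v.2) / v.2

lemma dot_self_pos {v : ℝ × ℝ} (hv : v ≠ 0) : 0 < dot v v := by
  have : v.1 ≠ 0 ∨ v.2 ≠ 0 := by
    contrapose! hv
    exact Prod.ext hv.1 hv.2
  unfold dot
  rcases this with h | h <;> nlinarith [mul_self_pos.mpr h, mul_self_nonneg v.1, mul_self_nonneg v.2]

lemma dot_smul_smul (c : ℝ) (a b : ℝ × ℝ) : dot (c • a) (c • b) = c ^ 2 * dot a b := by
  simp only [dot, Prod.smul_fst, Prod.smul_snd, smul_eq_mul]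
  ring

lemma mem_Lam_diag_iff (r : ℝ) (w : ℝ × ℝ) : ((r, w, w) : Pt) ∈ Lam ↔ dot w w + r * w.2 = 0 := by
  simp only [Lam, Set.mem_ofPred_eq, dot, perp, Prod.fst_add, Prod.snd_add, add_zero]
  constructor
  · exact fun h => h.1
  · intro h
    exact ⟨h, by ring, by linear_combination h⟩

lemma diag_eq_smul_add_smul {ρ lam ψ : ℝ} (v : ℝ × ℝ) (hlam : lam ≠ 0)
    (h : lam + (1 - lam) * ψ = ρ) :
    ((ρ, v, v) : Pt) = lam • ((1 : ℝ), lam⁻¹ • v, lam⁻¹ • v) + (1 - lam) • (ψ, (0 : ℝ × ℝ), (0 : ℝ × ℝ)) := by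
  simp only [Prod.smul_mk, Prod.mk_add_mk, smul_eq_mul, smul_smul, mul_inv_cancel₀ hlam, one_smul,
    smul_zero, add_zero, mul_one, h]

section Laminate

variable {ρ : ℝ} {v : ℝ × ℝ}

lemma dot_self_add_mul_snd_nonpos (hρ : ρ < 1) (hD : 0 < dot v v)
    (hcone : ρ - (1 - ρ ^ 2) * v.2 / dot v v ≥ 1) : dot v v + (1 + ρ) * v.2 ≤ 0 := by
  have h : (1 - ρ ^ 2) * v.2 ≤ (ρ - 1) * dot v v := by
    rw [← div_le_iff₀ hD]
    linarith
  nlinarith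

lemma snd_neg_of_dot_self_add_mul_snd_nonpos (hρ : -1 < ρ) (hD : 0 < dot v v)
    (h : dot v v + (1 + ρ) * v.2 ≤ 0) : v.2 < 0 := by
  nlinarith

lemma laminateWeight_denom_pos (hρ : ρ < 1) (hD : 0 < dot v v) (hv₂ : v.2 < 0) :
    0 < dot v v - (1 - ρ) * v.2 := by
  nlinarith

lemma laminateWeight_pos (hρ : ρ < 1) (hD : 0 < dot v v) (hv₂ : v.2 < 0) :
    0 < laminateWeight ρ v :=
  div_pos hD (laminateWeight_denom_pos hρ hD hv₂)

lemma laminateWeight_lt_one (hρ : ρ < 1) (hD : 0 < dot v v) (hv₂ : v.2 < 0) :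
    laminateWeight ρ v < 1 := by
  rw [laminateWeight, div_lt_one (laminateWeight_denom_pos hρ hD hv₂)]
  nlinarith

lemma neg_one_le_laminateDensity (hv₂ : v.2 < 0) (h : dot v v + (1 + ρ) * v.2 ≤ 0) :
    -1 ≤ laminateDensity ρ v := by
  rw [laminateDensity, le_div_iff_of_neg hv₂]
  linarith

lemma laminateDensity_lt (hD : 0 < dot v v) (hv₂ : v.2 < 0) : laminateDensity ρ v < ρ := by
  rw [laminateDensity, div_lt_iff_of_neg hv₂]
  linarith

lemma laminateWeight_add_mul_laminateDensity (hv₂ : v.2 ≠ 0)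
    (hden : dot v v - (1 - ρ) * v.2 ≠ 0) :
    laminateWeight ρ v + (1 - laminateWeight ρ v) * laminateDensity ρ v = ρ := by
  unfold laminateWeight laminateDensity
  field_simp
  ring

lemma dot_self_div_laminateWeight_add (hD : dot v v ≠ 0) (hv₂ : v.2 ≠ 0) :
    dot v v / laminateWeight ρ v + (1 - laminateDensity ρ v) * v.2 = 0 := by
  unfold laminateWeight laminateDensity
  field_simp
  ring

lemma laminate_direction_mem_Lam (hD : dot v v ≠ 0) (hv₂ : v.2 ≠ 0) :
    ((1 - laminateDensity ρ v, (laminateWeight ρ v)⁻¹ • v, (laminateWeight ρ v)⁻¹ • v) : Pt) ∈ Lam := by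
  rw [mem_Lam_diag_iff, dot_smul_smul, Prod.smul_snd, smul_eq_mul]
  linear_combination (laminateWeight ρ v)⁻¹ * dot_self_div_laminateWeight_add (ρ := ρ) hD hv₂

end Laminate

theorem stmt11 (ρ : ℝ) (v : ℝ × ℝ) (hρ : |ρ| < 1) (hv : v ≠ 0)
    (hcone : ρ - (1 - ρ ^ 2) * v.2 / dot v v ≥ 1) :
    v.2 < 0 ∧
    (0 < dot v v / (dot v v - (1 - ρ) * v.2) ∧ dot v v / (dot v v - (1 - ρ) * v.2) < 1) ∧
    (-1 ≤ (dot v v + ρ * v.2) / v.2 ∧ (dot v v + ρ * v.2) / v.2 < ρ) ∧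
    (((ρ, v, v) : Pt) =
      (dot v v / (dot v v - (1 - ρ) * v.2)) •
          ((1 : ℝ), (dot v v / (dot v v - (1 - ρ) * v.2))⁻¹ • v,
            (dot v v / (dot v v - (1 - ρ) * v.2))⁻¹ • v) +
        (1 - dot v v / (dot v v - (1 - ρ) * v.2)) •
          (((dot v v + ρ * v.2) / v.2 : ℝ), (0 : ℝ × ℝ), (0 : ℝ × ℝ))) ∧
    dot ((dot v v / (dot v v - (1 - ρ) * v.2))⁻¹ • v)
          ((dot v v / (dot v v - (1 - ρ) * v.2))⁻¹ • v) +
        (1 - (dot v v + ρ * v.2) / v.2) * (v.2 / (dot v v / (dot v v - (1 - ρ) * v.2))) = 0 := by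
  obtain ⟨hρ₀, hρ₁⟩ := abs_lt.mp hρ
  have hD := dot_self_pos hv
  have hkey := dot_self_add_mul_snd_nonpos hρ₁ hD hcone
  have hv₂ := snd_neg_of_dot_self_add_mul_snd_nonpos hρ₀ hD hkey
  have hlam := laminateWeight_pos hρ₁ hD hv₂
  have hcomb := laminateWeight_add_mul_laminateDensity hv₂.ne
    (laminateWeight_denom_pos hρ₁ hD hv₂).ne'
  have hΛ := (mem_Lam_diag_iff _ _).mp (laminate_direction_mem_Lam (ρ := ρ) hD.ne' hv₂.ne)
  refine ⟨hv₂, ⟨hlam, laminateWeight_lt_one hρ₁ hD hv₂⟩,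
    ⟨neg_one_le_laminateDensity hv₂ hkey, laminateDensity_lt hD hv₂⟩,
    diag_eq_smul_add_smul v hlam.ne' hcomb, ?_⟩
  rwa [Prod.smul_snd, smul_eq_mul, inv_mul_eq_div] at hΛ
end
end

section
/- Let G₃(ρ,v,m) = −(v−m)·(v+(0,1+ρ)) + |v−m|²/2. For ρ < 1, v ≠ 0 and k ∈ ℝ one has (1−ρ)G₃(ρ,v,kv) = (k−1)((1−ρ)|v|² + (1−ρ²)v₂ + (1−ρ)(k−1)|v|²/2), and if this quantity is ≤ 0 and (1−ρ)|v|² + (1−ρ²)v₂ ≤ 0, then k ≥ 1. -/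
open MeasureTheory

noncomputable section

theorem stmt14 (ρ k : ℝ) (v : ℝ × ℝ) (hρ : ρ < 1) (hv : v ≠ 0) :
    (1 - ρ) * G3 (ρ, v, k • v) =
      (k - 1) * ((1 - ρ) * dot v v + (1 - ρ ^ 2) * v.2 + (1 - ρ) * (k - 1) * dot v v / 2) ∧
    ((1 - ρ) * G3 (ρ, v, k • v) ≤ 0 →
      (1 - ρ) * dot v v + (1 - ρ ^ 2) * v.2 ≤ 0 → 1 ≤ k) := by
  have hvv : 0 < dot v v := by
    have h : v.1 ≠ 0 ∨ v.2 ≠ 0 := by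
      by_contra h
      push_neg at h
      exact hv (Prod.ext h.1 h.2)
    rcases h with h | h <;> unfold dot <;>
      nlinarith [sq_nonneg v.1, sq_nonneg v.2, mul_self_pos.mpr h]
  constructor
  · simp only [G3, dot, Prod.smul_fst, Prod.smul_snd, smul_eq_mul, Prod.fst_sub, Prod.snd_sub,
      Prod.fst_add, Prod.snd_add]
    ring
  · intro h1 h2
    by_contra hk
    push_neg at hk
    have heq : (1 - ρ) * G3 (ρ, v, k • v) =
        (k - 1) * ((1 - ρ) * dot v v + (1 - ρ ^ 2) * v.2 + (1 - ρ) * (k - 1) * dot v v / 2) := by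
      simp only [G3, dot, Prod.smul_fst, Prod.smul_snd, smul_eq_mul, Prod.fst_sub, Prod.snd_sub,
        Prod.fst_add, Prod.snd_add]
      ring
    rw [heq] at h1
    have hA : 0 ≤ (k - 1) * ((1 - ρ) * dot v v + (1 - ρ ^ 2) * v.2) :=
      mul_nonneg_of_nonpos_of_nonpos (by linarith) h2
    have hB : 0 < (k - 1) * ((1 - ρ) * (k - 1) * dot v v / 2) := by
      have h0 : 0 < (k - 1) * (k - 1) :=
        mul_pos_of_neg_of_neg (by linarith) (by linarith)
      nlinarith [mul_pos (mul_pos h0 (sub_pos.mpr hρ)) hvv]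
    linarith
end
end

section
/- Let |ρ| ≤ 1 and v ≠ 0 with ρ − (1−ρ²)v₂/|v|² ≥ 1, and suppose m = kv with k ∈ ℝ, |m − ρv + (0,(1−ρ²)/2)| ≤ (1−ρ²)/2, and (1−ρ)G₃(ρ,v,m) ≤ 0 where G₃(ρ,v,m) = −(v−m)·(v+(0,1+ρ)) + |v−m|²/2. Then 1 ≤ k ≤ ρ − (1−ρ²)v₂/|v|². -/
open MeasureTheory

noncomputable section

lemma nrm_nonneg (a : ℝ × ℝ) : 0 ≤ nrm a := Real.sqrt_nonneg _

lemma dot_self_le_sq_of_nrm_le {a : ℝ × ℝ} {r : ℝ} (h : nrm a ≤ r) : dot a a ≤ r ^ 2 := by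
  have := (Real.sqrt_le_iff.mp h).2
  unfold dot
  nlinarith

lemma mem_Icc_of_nrm_le {ρ k c : ℝ} {v : ℝ × ℝ} (hA : 0 < dot v v)
    (hK : ρ ≤ ρ - c * v.2 / dot v v) (h : nrm (k • v - ρ • v + (0, c / 2)) ≤ c / 2) :
    k ∈ Set.Icc ρ (ρ - c * v.2 / dot v v) := by
  set K := ρ - c * v.2 / dot v v
  have hcv : c * v.2 = (ρ - K) * dot v v := by
    simp only [K]
    field_simp
    ring
  have hdisc : (k - ρ) * ((k - ρ) * dot v v + c * v.2) ≤ 0 := by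
    have := dot_self_le_sq_of_nrm_le h
    simp only [dot, Prod.fst_add, Prod.snd_add, Prod.fst_sub, Prod.snd_sub, Prod.smul_fst,
      Prod.smul_snd, smul_eq_mul] at this ⊢
    nlinarith
  rw [hcv] at hdisc
  have hprod : (k - ρ) * (k - K) ≤ 0 := by
    by_contra! hpos
    nlinarith
  constructor <;> nlinarith

lemma G3_smul (ρ k : ℝ) (v : ℝ × ℝ) :
    G3 (ρ, v, k • v) = -(1 - k) * dot v (v + (0, 1 + ρ)) + (1 - k) ^ 2 * dot v v / 2 := by
  simp only [G3, dot, Prod.fst_add, Prod.snd_add, Prod.fst_sub, Prod.snd_sub, Prod.smul_fst,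
    Prod.smul_snd, smul_eq_mul]
  ring

lemma dot_add_nonpos_of_cone {ρ : ℝ} {v : ℝ × ℝ} (hA : 0 < dot v v) (hρ : ρ < 1)
    (hcone : 1 ≤ ρ - (1 - ρ ^ 2) * v.2 / dot v v) : dot v (v + (0, 1 + ρ)) ≤ 0 := by
  have h : (1 - ρ) * ((1 + ρ) * v.2) ≤ (1 - ρ) * (-dot v v) := by
    have := (div_le_iff₀ hA).mp (by linarith : (1 - ρ ^ 2) * v.2 / dot v v ≤ ρ - 1)
    nlinarith
  have := le_of_mul_le_mul_left h (by linarith)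
  simp only [dot, Prod.fst_add, Prod.snd_add] at this ⊢
  linarith

lemma one_le_of_G3_nonpos {ρ k : ℝ} {v : ℝ × ℝ} (hA : 0 < dot v v)
    (hcone : dot v (v + (0, 1 + ρ)) ≤ 0) (hG3 : G3 (ρ, v, k • v) ≤ 0) : 1 ≤ k := by
  rw [G3_smul] at hG3
  by_contra! hk
  have : 0 < (1 - k) ^ 2 * dot v v / 2 := by
    have : 0 < 1 - k := by linarith
    positivity
  nlinarith

theorem stmt15_general (ρ k : ℝ) (v m : ℝ × ℝ) (hv : v ≠ 0)
    (hcone : ρ - (1 - ρ ^ 2) * v.2 / dot v v ≥ 1) (hm : m = k • v)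
    (hG1 : nrm (m - ρ • v + (0, (1 - ρ ^ 2) / 2)) ≤ (1 - ρ ^ 2) / 2)
    (hG3 : (1 - ρ) * G3 (ρ, v, m) ≤ 0) :
    1 ≤ k ∧ k ≤ ρ - (1 - ρ ^ 2) * v.2 / dot v v := by
  subst hm
  have hA := dot_self_pos hv
  have hρ : ρ ≤ 1 := by nlinarith [(nrm_nonneg _).trans hG1]
  obtain ⟨hρk, hkK⟩ := mem_Icc_of_nrm_le hA (by linarith) hG1
  refine ⟨?_, hkK⟩
  rcases hρ.eq_or_lt with hρ | hρ
  · linarith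
  · exact one_le_of_G3_nonpos hA (dot_add_nonpos_of_cone hA hρ hcone)
      (nonpos_of_mul_nonpos_right hG3 (by linarith))

theorem stmt15 (ρ k : ℝ) (v m : ℝ × ℝ) (hρ : |ρ| ≤ 1) (hv : v ≠ 0)
    (hcone : ρ - (1 - ρ ^ 2) * v.2 / dot v v ≥ 1) (hm : m = k • v)
    (hG1 : nrm (m - ρ • v + (0, (1 - ρ ^ 2) / 2)) ≤ (1 - ρ ^ 2) / 2)
    (hG3 : (1 - ρ) * G3 (ρ, v, m) ≤ 0) :
    1 ≤ k ∧ k ≤ ρ - (1 - ρ ^ 2) * v.2 / dot v v :=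
  stmt15_general ρ k v m hv hcone hm hG1 hG3
end
end

section
/- Suppose z₁ = (ρ, 0, m) with |ρ| ≤ 1, and z = (ρ+ε, v, m̃) with v ≠ 0 and z − z₁ ∈ Λ. Then ε ≠ 0, and: if 0 < ε ≤ 1−ρ then |v|² + (ρ+ε+1)v₂ ≤ 0 and v₂ < 0; if −1−ρ ≤ ε < 0 then |v|² + (ρ+ε−1)v₂ ≤ 0 and v₂ > 0. -/
open MeasureTheory

noncomputable section

lemma mul_snd_neg_of_dot_self_add_mul_snd_eq_zero {ε : ℝ} {v : ℝ × ℝ} (hv : v ≠ 0)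
    (h : dot v v + ε * v.2 = 0) : ε * v.2 < 0 := by
  linarith [dot_self_pos hv]

theorem stmt18 (ρ ε : ℝ) (v m mt : ℝ × ℝ) (hρ : |ρ| ≤ 1) (hv : v ≠ 0)
    (hΛ : (((ρ + ε, v, mt) : Pt) - (ρ, 0, m)) ∈ Lam) :
    ε ≠ 0 ∧
    (0 < ε → ε ≤ 1 - ρ → dot v v + (ρ + ε + 1) * v.2 ≤ 0 ∧ v.2 < 0) ∧
    (-1 - ρ ≤ ε → ε < 0 → dot v v + (ρ + ε - 1) * v.2 ≤ 0 ∧ 0 < v.2) := by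
  have hcone : dot v v + ε * v.2 = 0 := by
    simpa [add_sub_cancel_left] using hΛ.1
  have hεv := mul_snd_neg_of_dot_self_add_mul_snd_eq_zero hv hcone
  obtain ⟨hρ_lower, hρ_upper⟩ := abs_le.mp hρ
  refine ⟨left_ne_zero_of_mul hεv.ne, fun hε _ => ?_, fun _ hε => ?_⟩
  · have hv2 : v.2 < 0 := neg_of_mul_neg_right hεv hε.le
    refine ⟨?_, hv2⟩
    linear_combination hcone + mul_nonpos_of_nonneg_of_nonpos (by linarith : 0 ≤ ρ + 1) hv2.le
  · have hv2 : 0 < v.2 := pos_of_mul_neg_right hεv hε.le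
    refine ⟨?_, hv2⟩
    linear_combination hcone + mul_nonpos_of_nonpos_of_nonneg (by linarith : ρ - 1 ≤ 0) hv2.le
end
end
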